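/- arXiv:1310.0296 — 4 statements merged into one kernel-verified Lean document; each statement's English description precedes it below -/
import Mathlib

section
/- If l1 > 0, l2 > 0 and q2 is not an integer multiple of π, then the Jacobian matrix J = [[-l1·sin(q1) - l2·sin(q1+q2), -l2·sin(q1+q2)], [l1·cos(q1) + l2·cos(q1+q2), l2·cos(q1+q2)]] is invertible. -/
open Real

theorem det_planarTwoLinkJacobian (l1 l2 q1 q2 : ℝ) :
    (!![-l1 * sin q1 - l2 * sin (q1 + q2), -l2 * sin (q1 + q2);
        l1 * cos q1 + l2 * cos (q1 + q2), l2 * cos (q1 + q2)] : Matrix (Fin 2) (Fin 2) ℝ).det =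
      l1 * l2 * sin q2 := by
  rw [Matrix.det_fin_two_of, sin_add, cos_add]
  linear_combination l1 * l2 * sin q2 * sin_sq_add_cos_sq q1

theorem jacobian_invertible (l1 l2 q1 q2 : ℝ) (hl1 : 0 < l1) (hl2 : 0 < l2)
    (hq2 : ∀ n : ℤ, q2 ≠ n * Real.pi) :
    IsUnit (!![-l1 * Real.sin q1 - l2 * Real.sin (q1 + q2), -l2 * Real.sin (q1 + q2);
               l1 * Real.cos q1 + l2 * Real.cos (q1 + q2), l2 * Real.cos (q1 + q2)] :
        Matrix (Fin 2) (Fin 2) ℝ) := by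
  have hsin : sin q2 ≠ 0 := sin_ne_zero_iff.mpr fun n hn => hq2 n hn.symm
  rw [Matrix.isUnit_iff_isUnit_det, det_planarTwoLinkJacobian]
  exact (mul_ne_zero (mul_ne_zero hl1.ne' hl2.ne') hsin).isUnit
end

section
/- Geometric relation for the two-link mechanism: if q0 := 2π - (q1+q2) + arctan((l1·sin(q1)+l2·sin(q1+q2))/(l1·cos(q1)+l2·cos(q1+q2))), l1, l2 > 0, l1·cos(q1)+l2·cos(q1+q2) > 0, then sin(q0) = -l1·sin(q2)/√(l1² + l2² + 2·l1·l2·cos(q2)). -/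
/-!
Write `(x, y) = l1 (cos q1, sin q1) + l2 (cos (q1 + q2), sin (q1 + q2))` for the end point of the
two-link arm. Since `x > 0`, `arctan (y / x)` is the polar angle of `(x, y)`, so
`sin (arctan (y / x) - θ) = (y cos θ - x sin θ) / √(x² + y²)`. For `θ = q1 + q2` the numerator is
`l1 sin (q1 - (q1 + q2)) = -l1 sin q2`, and `x² + y² = l1² + l2² + 2 l1 l2 cos q2` by the law of
cosines; the `2π` only shifts the angle by a period.
-/

open Real

lemma sqrt_one_add_div_sq {x : ℝ} (hx : 0 < x) (y : ℝ) :
    √(1 + (y / x) ^ 2) = √(x ^ 2 + y ^ 2) / x := by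
  have hx2 : 1 + (y / x) ^ 2 = (x ^ 2 + y ^ 2) / x ^ 2 := by
    field_simp
  rw [hx2, sqrt_div' _ (sq_nonneg x), sqrt_sq hx.le]

lemma sin_arctan_div {x : ℝ} (hx : 0 < x) (y : ℝ) :
    sin (arctan (y / x)) = y / √(x ^ 2 + y ^ 2) := by
  rw [sin_arctan, sqrt_one_add_div_sq hx]
  field_simp

lemma cos_arctan_div {x : ℝ} (hx : 0 < x) (y : ℝ) :
    cos (arctan (y / x)) = x / √(x ^ 2 + y ^ 2) := by
  rw [cos_arctan, sqrt_one_add_div_sq hx, one_div_div]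

lemma sin_arctan_div_sub {x : ℝ} (hx : 0 < x) (y θ : ℝ) :
    sin (arctan (y / x) - θ) = (y * cos θ - x * sin θ) / √(x ^ 2 + y ^ 2) := by
  rw [sin_sub, sin_arctan_div hx, cos_arctan_div hx]
  ring

lemma two_link_norm_sq (l1 l2 q1 q2 : ℝ) :
    (l1 * cos q1 + l2 * cos (q1 + q2)) ^ 2 + (l1 * sin q1 + l2 * sin (q1 + q2)) ^ 2
      = l1 ^ 2 + l2 ^ 2 + 2 * l1 * l2 * cos q2 := by
  rw [cos_add, sin_add]
  linear_combination (l1 ^ 2 + 2 * l1 * l2 * cos q2) * sin_sq_add_cos_sq q1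
    + l2 ^ 2 * (sin_sq_add_cos_sq q1 * (sin q2 ^ 2 + cos q2 ^ 2) + sin_sq_add_cos_sq q2)

lemma two_link_cross (l1 l2 q1 q2 : ℝ) :
    (l1 * sin q1 + l2 * sin (q1 + q2)) * cos (q1 + q2)
        - (l1 * cos q1 + l2 * cos (q1 + q2)) * sin (q1 + q2)
      = -l1 * sin q2 := by
  rw [cos_add, sin_add]
  linear_combination -l1 * sin q2 * sin_sq_add_cos_sq q1

theorem geometric_relation_sin_q0_general (l1 l2 q1 q2 : ℝ)
    (hx : 0 < l1 * Real.cos q1 + l2 * Real.cos (q1 + q2)) :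
    Real.sin (2 * Real.pi - (q1 + q2) +
        Real.arctan ((l1 * Real.sin q1 + l2 * Real.sin (q1 + q2)) /
          (l1 * Real.cos q1 + l2 * Real.cos (q1 + q2))))
      = -l1 * Real.sin q2 / Real.sqrt (l1 ^ 2 + l2 ^ 2 + 2 * l1 * l2 * Real.cos q2) := by
  rw [add_comm, ← add_sub_assoc, add_sub_right_comm, sin_add_two_pi, sin_arctan_div_sub hx,
    two_link_cross, two_link_norm_sq]

theorem geometric_relation_sin_q0 (l1 l2 q1 q2 : ℝ) (hl1 : 0 < l1) (hl2 : 0 < l2)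
    (hx : 0 < l1 * Real.cos q1 + l2 * Real.cos (q1 + q2))
    (hpos : 0 < l1 ^ 2 + l2 ^ 2 + 2 * l1 * l2 * Real.cos q2) :
    Real.sin (2 * Real.pi - (q1 + q2) +
        Real.arctan ((l1 * Real.sin q1 + l2 * Real.sin (q1 + q2)) /
          (l1 * Real.cos q1 + l2 * Real.cos (q1 + q2))))
      = -l1 * Real.sin q2 / Real.sqrt (l1 ^ 2 + l2 ^ 2 + 2 * l1 * l2 * Real.cos q2) :=
  geometric_relation_sin_q0_general l1 l2 q1 q2 hx
end

section
/- If the constraints l1·cos(q1)+l2·cos(q1+q2) = l3·cos(q3)+cx and l1·sin(q1)+l2·sin(q1+q2) = l3·sin(q3)+cy hold and q3 - π/2 = q1 + q2, then sin(q3)·(cy·l3 - cx·l2) + cos(q3)·(cx·l3 + cy·l2) = -(l3² + l2² - l1² + cx² + cy²)/2. -/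
/-!
Orthogonality turns the second link into `l₂ (sin q₃, -cos q₃)`, perpendicular to the third link
`l₃ (cos q₃, sin q₃)`. Solving the two chain equations for the first link and taking its squared
length, `l₁² = |l₃ u + c - l₂ u⊥|²`, the cross term `l₂ l₃ ⟪u, u⊥⟫` vanishes, and what is left is the
identity.
-/

open Real

lemma sq_eq_sq_add_sq_of_mul_cos_of_mul_sin {r θ x y : ℝ} (hx : r * cos θ = x)
    (hy : r * sin θ = y) : r ^ 2 = x ^ 2 + y ^ 2 := by
  rw [← hx, ← hy]
  linear_combination r ^ 2 * (sin_sq_add_cos_sq θ).symm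

theorem glut_orthogonality_identity (l1 l2 l3 cx cy q1 q2 q3 : ℝ)
    (h1 : l1 * Real.cos q1 + l2 * Real.cos (q1 + q2) = l3 * Real.cos q3 + cx)
    (h2 : l1 * Real.sin q1 + l2 * Real.sin (q1 + q2) = l3 * Real.sin q3 + cy)
    (horth : q3 - Real.pi / 2 = q1 + q2) :
    Real.sin q3 * (cy * l3 - cx * l2) + Real.cos q3 * (cx * l3 + cy * l2)
      = -(l3 ^ 2 + l2 ^ 2 - l1 ^ 2 + cx ^ 2 + cy ^ 2) / 2 := by
  have hcos : cos (q1 + q2) = sin q3 := by rw [← horth, cos_sub_pi_div_two]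
  have hsin : sin (q1 + q2) = -cos q3 := by rw [← horth, sin_sub_pi_div_two]
  have hl1 := sq_eq_sq_add_sq_of_mul_cos_of_mul_sin
    (r := l1) (θ := q1) (x := l3 * cos q3 + cx - l2 * sin q3) (y := l3 * sin q3 + cy + l2 * cos q3)
    (by linear_combination h1 - l2 * hcos) (by linear_combination h2 - l2 * hsin)
  linear_combination (-1 / 2 : ℝ) * hl1 - (l2 ^ 2 + l3 ^ 2) / 2 * sin_sq_add_cos_sq q3
end

section
/- Integral sign lemma for the RISE structure: let e2 : ℝ → ℝ be continuously differentiable and N_d : ℝ → ℝ continuously differentiable with |N_d(t)| ≤ ζ₀ and |N_d'(t)| ≤ ζ₁ for all t. If β > ζ₀ + ζ₁/α₂ with α₂ > 0, then for all t ≥ 0: ∫₀ᵗ (e2'(s) + α₂·e2(s))·(β·sgn(e2(s)) - N_d(s)) ds ≥ -β·|e2(0)| + e2(0)·N_d(0). -/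
/-!
Write `V = β |e2| - e2 N_d`. Off the countable set where `e2` vanishes with nonzero derivative,
`V' = β e2' sgn(e2) - e2' N_d - e2 N_d'`, so the integrand equals
`V' + (e2 N_d' + α₂ (β |e2| - e2 N_d))`. The second summand is at least
`|e2| (α₂ β - α₂ ζ₀ - ζ₁) ≥ 0`, hence the integral is at least `V(t) - V(0) ≥ -V(0)`,
as `V ≥ (β - ζ₀) |e2| ≥ 0`.
-/

open MeasureTheory Filter

namespace Real

lemma measurable_sign : Measurable Real.sign :=
  Measurable.ite measurableSet_Iio measurable_const
    (Measurable.ite measurableSet_Ioi measurable_const measurable_const)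

lemma mul_sign_self (x : ℝ) : x * sign x = |x| := by
  rcases lt_trichotomy x 0 with hx | rfl | hx
  · rw [sign_of_neg hx, abs_of_neg hx, mul_neg_one]
  · simp
  · rw [sign_of_pos hx, abs_of_pos hx, mul_one]

lemma abs_sign_le_one (x : ℝ) : |sign x| ≤ 1 := by
  rcases sign_apply_eq x with h | h | h <;> simp [h]

lemma sign_eq_signType_sign (x : ℝ) : sign x = (SignType.sign x : ℝ) := by
  rcases lt_trichotomy x 0 with hx | rfl | hx
  · simp [sign_of_neg hx, hx]
  · simp
  · simp [sign_of_pos hx, hx]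

end Real

/-- A point where `f = c` and `f' ≠ 0` is isolated in the level set. -/
lemma countable_setOf_eq_and_deriv_ne_zero {F : Type*} [NormedAddCommGroup F] [NormedSpace ℝ F]
    (f : ℝ → F) (c : F) : {x | f x = c ∧ deriv f x ≠ 0}.Countable := by
  refine (HereditarilyLindelofSpace.isLindelof _).countable_of_isDiscrete ?_
  rw [isDiscrete_iff_nhdsNE]
  rintro x ⟨-, hx⟩
  rw [inf_principal_eq_bot]
  filter_upwards [(differentiableAt_of_deriv_ne_zero hx).hasDerivAt.eventually_ne (c := c) hx]
    with y hy using fun h => hy h.1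

lemma HasDerivAt.abs_of_eq_zero {f : ℝ → ℝ} {x : ℝ} (hf : HasDerivAt f 0 x) (h₀ : f x = 0) :
    HasDerivAt (fun y => |f y|) 0 x := by
  rw [hasDerivAt_iff_isLittleO] at hf ⊢
  simpa [h₀] using hf.norm_left

lemma HasDerivAt.abs_mul_sign {f : ℝ → ℝ} {f' x : ℝ} (hf : HasDerivAt f f' x)
    (h : f x = 0 → f' = 0) : HasDerivAt (fun y => |f y|) (f' * Real.sign (f x)) x := by
  by_cases h₀ : f x = 0
  · rw [h h₀, zero_mul]
    exact (h h₀ ▸ hf).abs_of_eq_zero h₀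
  · rw [Real.sign_eq_signType_sign, mul_comm]
    exact (hasDerivAt_abs h₀).comp x hf

lemma intervalIntegrable_mul_sign_comp {g f : ℝ → ℝ} (hg : Continuous g) (hf : Measurable f)
    (μ : Measure ℝ) [IsLocallyFiniteMeasure μ] (a b : ℝ) :
    IntervalIntegrable (fun x => g x * Real.sign (f x)) μ a b := by
  refine (hg.intervalIntegrable a b).mono_fun
    (hg.measurable.mul (Real.measurable_sign.comp hf)).aestronglyMeasurable
    (Eventually.of_forall fun x => ?_)
  show ‖g x * _‖ ≤ ‖g x‖
  rw [norm_mul]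
  exact mul_le_of_le_one_right (norm_nonneg _) (Real.abs_sign_le_one _)

namespace intervalIntegral

theorem integral_deriv_mul_sign {f : ℝ → ℝ} (hf : ContDiff ℝ 1 f) (a b : ℝ) :
    ∫ x in a..b, deriv f x * Real.sign (f x) = |f b| - |f a| :=
  integral_eq_of_hasDerivAt_off_countable _ _ (countable_setOf_eq_and_deriv_ne_zero f 0)
    hf.continuous.abs.continuousOn
    (fun x hx => (hf.differentiable one_ne_zero x).hasDerivAt.abs_mul_sign
      fun h₀ => not_not.1 fun hne => hx.2 ⟨h₀, hne⟩)
    (intervalIntegrable_mul_sign_comp (hf.continuous_deriv le_rfl) hf.continuous.measurable _ a b)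

theorem integral_const_mul_deriv_abs_sub_deriv_mul {f g : ℝ → ℝ} (hf : ContDiff ℝ 1 f)
    (hg : ContDiff ℝ 1 g) (β a b : ℝ) :
    ∫ x in a..b, β * (deriv f x * Real.sign (f x)) - (deriv f x * g x + f x * deriv g x) =
      (β * |f b| - f b * g b) - (β * |f a| - f a * g a) := by
  have hf₀ := hf.continuous
  have hg₀ := hg.continuous
  have hf' := hf.continuous_deriv le_rfl
  have hg' := hg.continuous_deriv le_rfl
  rw [integral_sub ((intervalIntegrable_mul_sign_comp hf' hf₀.measurable _ a b).const_mul β)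
      ((by fun_prop : Continuous fun x => deriv f x * g x + f x * deriv g x).intervalIntegrable a b),
    integral_const_mul, integral_deriv_mul_sign hf,
    integral_deriv_mul_eq_sub (fun x _ => (hf.differentiable one_ne_zero x).hasDerivAt)
      (fun x _ => (hg.differentiable one_ne_zero x).hasDerivAt)
      (hf'.intervalIntegrable a b) (hg'.intervalIntegrable a b)]
  ring

theorem integral_deriv_add_mul_mul_sign_sub {f g : ℝ → ℝ} (hf : ContDiff ℝ 1 f)
    (hg : ContDiff ℝ 1 g) (α β a b : ℝ) :
    ∫ x in a..b, (deriv f x + α * f x) * (β * Real.sign (f x) - g x) =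
      (β * |f b| - f b * g b) - (β * |f a| - f a * g a) +
        ∫ x in a..b, f x * deriv g x + α * (β * |f x| - f x * g x) := by
  have hf₀ := hf.continuous
  have hg₀ := hg.continuous
  have hf' := hf.continuous_deriv le_rfl
  have hg' := hg.continuous_deriv le_rfl
  rw [← integral_const_mul_deriv_abs_sub_deriv_mul hf hg, ← integral_add
      (((intervalIntegrable_mul_sign_comp hf' hf₀.measurable _ a b).const_mul β).sub
        ((by fun_prop : Continuous _).intervalIntegrable a b))
      ((by fun_prop : Continuous _).intervalIntegrable a b)]
  refine integral_congr fun x _ => ?_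
  simp only [← Real.mul_sign_self]
  ring

end intervalIntegral

lemma abs_mul_le_of_abs_le {x n ζ : ℝ} (h : |n| ≤ ζ) : |x * n| ≤ |x| * ζ :=
  abs_mul x n ▸ mul_le_mul_of_nonneg_left h (abs_nonneg x)

lemma mul_add_mul_sub_nonneg_of_abs_le {x n n' α β ζ₀ ζ₁ : ℝ} (hα : 0 ≤ α) (hn : |n| ≤ ζ₀)
    (hn' : |n'| ≤ ζ₁) (hβ : α * ζ₀ + ζ₁ ≤ α * β) : 0 ≤ x * n' + α * (β * |x| - x * n) := by
  have h₀ := (abs_le.1 (abs_mul_le_of_abs_le (x := x) hn)).2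
  have h₁ := (abs_le.1 (abs_mul_le_of_abs_le (x := x) hn')).1
  nlinarith [mul_nonneg (abs_nonneg x) (sub_nonneg.2 hβ), mul_le_mul_of_nonneg_left h₀ hα]

theorem rise_integral_sign_general (α2 β ζ0 ζ1 : ℝ) (e2 Nd : ℝ → ℝ)
    (hα2 : 0 < α2)
    (he2 : ContDiff ℝ 1 e2) (hNd : ContDiff ℝ 1 Nd)
    (hNdb : ∀ t, |Nd t| ≤ ζ0) (hNd'b : ∀ t, |deriv Nd t| ≤ ζ1)
    (hβ : β > ζ0 + ζ1 / α2) :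
    ∀ t, 0 ≤ t →
      ∫ s in (0:ℝ)..t, (deriv e2 s + α2 * e2 s) * (β * Real.sign (e2 s) - Nd s)
        ≥ -β * |e2 0| + e2 0 * Nd 0 := by
  intro t ht
  have hζ0β : ζ0 ≤ β :=
    (le_add_of_nonneg_right (div_nonneg ((abs_nonneg _).trans (hNd'b 0)) hα2.le)).trans hβ.le
  have hgain : α2 * ζ0 + ζ1 ≤ α2 * β := by
    simpa [mul_add, mul_div_cancel₀ _ hα2.ne'] using (mul_lt_mul_of_pos_left hβ hα2).le
  have hend : e2 t * Nd t ≤ β * |e2 t| :=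
    calc e2 t * Nd t ≤ |e2 t| * ζ0 := (le_abs_self _).trans (abs_mul_le_of_abs_le (hNdb t))
      _ ≤ β * |e2 t| := by rw [mul_comm]; exact mul_le_mul_of_nonneg_right hζ0β (abs_nonneg _)
  have hrest : 0 ≤ ∫ s in (0:ℝ)..t, e2 s * deriv Nd s + α2 * (β * |e2 s| - e2 s * Nd s) :=
    intervalIntegral.integral_nonneg ht fun s _ =>
      mul_add_mul_sub_nonneg_of_abs_le hα2.le (hNdb s) (hNd'b s) hgain
  rw [ge_iff_le, intervalIntegral.integral_deriv_add_mul_mul_sign_sub he2 hNd]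
  linarith

theorem rise_integral_sign (α2 β ζ0 ζ1 : ℝ) (e2 Nd : ℝ → ℝ)
    (hα2 : 0 < α2) (hζ0 : 0 < ζ0) (hζ1 : 0 < ζ1)
    (he2 : ContDiff ℝ 1 e2) (hNd : ContDiff ℝ 1 Nd)
    (hNdb : ∀ t, |Nd t| ≤ ζ0) (hNd'b : ∀ t, |deriv Nd t| ≤ ζ1)
    (hβ : β > ζ0 + ζ1 / α2) :
    ∀ t, 0 ≤ t →
      ∫ s in (0:ℝ)..t, (deriv e2 s + α2 * e2 s) * (β * Real.sign (e2 s) - Nd s)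
        ≥ -β * |e2 0| + e2 0 * Nd 0 :=
  rise_integral_sign_general α2 β ζ0 ζ1 e2 Nd hα2 he2 hNd hNdb hNd'b hβ
end
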